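/- Let V ∈ ℝ^{n×r} have orthonormal columns, let i_1,…,i_r ∈ {1,…,n} be distinct indices, and assume the r×r matrix Vᵀ E_I is invertible. Then ‖I_n − E_I (Vᵀ E_I)⁻¹ Vᵀ‖_F² = n − 2r + ‖(Vᵀ E_I)⁻¹‖_F². -/
import Mathlib


open Matrix BigOperators

/-- One step of the ARP recursion: project out the `i`-th row of `W`
(convention: leave `W` unchanged if that row is zero). -/
noncomputable def arpStep {n r : ℕ} (W : Matrix (Fin n) (Fin r) ℝ) (i : Fin n) :
    Matrix (Fin n) (Fin r) ℝ :=
  if W i = 0 then W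
  else W * (1 - (∑ l, (W i l) ^ 2)⁻¹ • Matrix.of fun a b => W i a * W i b)

/-- The ARP iterates `V_k`. -/
noncomputable def arpIter {n r : ℕ} (V : Matrix (Fin n) (Fin r) ℝ) (j : Fin r → Fin n) :
    ℕ → Matrix (Fin n) (Fin r) ℝ
  | 0 => V
  | k + 1 => if h : k < r then arpStep (arpIter V j k) (j ⟨k, h⟩) else arpIter V j k

/-- The ARP weight `w(j) = ∏_{k=1}^r ‖v_k‖²/(r-k+1)`. -/
noncomputable def arpWeight {n r : ℕ} (V : Matrix (Fin n) (Fin r) ℝ) (j : Fin r → Fin n) : ℝ :=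
  ∏ k : Fin r, (∑ l, (arpIter V j k.val (j k) l) ^ 2) / ((r : ℝ) - (k.val : ℝ))

/-- The matrix `E_J` whose `k`-th column is the `j_k`-th standard basis vector of ℝⁿ. -/
def EJ {n k : ℕ} (j : Fin k → Fin n) : Matrix (Fin n) (Fin k) ℝ :=
  Matrix.of fun i l => if i = j l then 1 else 0

/-- Squared Frobenius norm. -/
def frobSq {m n : ℕ} (A : Matrix (Fin m) (Fin n) ℝ) : ℝ := ∑ i, ∑ j, (A i j) ^ 2


lemma frobSq_eq_trace {m n : ℕ} (A : Matrix (Fin m) (Fin n) ℝ) :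
    frobSq A = (Aᵀ * A).trace := by
  simp [frobSq, Matrix.trace, Matrix.mul_apply, Matrix.diag, sq]
  rw [Finset.sum_comm]

/-- `‖I − E_I (Vᵀ E_I)⁻¹ Vᵀ‖_F² = n − 2r + ‖(Vᵀ E_I)⁻¹‖_F²`. -/
theorem oblique_projector_frobSq {n r : ℕ} (hrn : r ≤ n)
    (V : Matrix (Fin n) (Fin r) ℝ) (hV : Vᵀ * V = 1)
    (i : Fin r → Fin n) (hi : Function.Injective i)
    (hdet : IsUnit (Vᵀ * EJ i).det) :
    frobSq ((1 : Matrix (Fin n) (Fin n) ℝ) - EJ i * (Vᵀ * EJ i)⁻¹ * Vᵀ) =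
      (n : ℝ) - 2 * (r : ℝ) + frobSq ((Vᵀ * EJ i)⁻¹) := by
  set M := Vᵀ * EJ i with hM
  have hE : (EJ i)ᵀ * EJ i = (1 : Matrix (Fin r) (Fin r) ℝ) := by
    ext k l
    by_cases h : k = l
    · subst h; simp [Matrix.mul_apply, EJ, Matrix.one_apply]
    · have hne : i k ≠ i l := fun hh => h (hi hh)
      simp [Matrix.mul_apply, EJ, Matrix.one_apply, h, hne, ite_mul, mul_ite]
      exact Ne.symm hne
  have hMM : M * M⁻¹ = 1 := Matrix.mul_nonsing_inv _ hdet
  have hTrP : (EJ i * M⁻¹ * Vᵀ).trace = (r : ℝ) := by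
    rw [Matrix.trace_mul_cycle,
      show Vᵀ * EJ i * M⁻¹ = (1 : Matrix (Fin r) (Fin r) ℝ) from hMM]
    simp
  rw [frobSq_eq_trace, frobSq_eq_trace]
  have expand : ((1 : Matrix (Fin n) (Fin n) ℝ) - EJ i * M⁻¹ * Vᵀ)ᵀ *
      ((1 : Matrix (Fin n) (Fin n) ℝ) - EJ i * M⁻¹ * Vᵀ) =
      1 - (EJ i * M⁻¹ * Vᵀ) - (EJ i * M⁻¹ * Vᵀ)ᵀ +
      (EJ i * M⁻¹ * Vᵀ)ᵀ * (EJ i * M⁻¹ * Vᵀ) := by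
    simp only [Matrix.transpose_sub, Matrix.transpose_one, Matrix.sub_mul,
      Matrix.mul_sub, Matrix.mul_one, Matrix.one_mul]
    abel
  rw [expand]
  have hPP : (EJ i * M⁻¹ * Vᵀ)ᵀ * (EJ i * M⁻¹ * Vᵀ) =
      V * ((M⁻¹)ᵀ * (M⁻¹ * Vᵀ)) := by
    simp only [Matrix.transpose_mul, Matrix.transpose_transpose, Matrix.mul_assoc]
    rw [show (EJ i)ᵀ * (EJ i * (M⁻¹ * Vᵀ)) = M⁻¹ * Vᵀ by
      rw [← Matrix.mul_assoc, hE, Matrix.one_mul]]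
  rw [hPP]
  have hTrPP : (V * ((M⁻¹)ᵀ * (M⁻¹ * Vᵀ))).trace = ((M⁻¹)ᵀ * M⁻¹).trace := by
    rw [Matrix.trace_mul_comm]
    simp only [Matrix.mul_assoc]
    rw [hV, Matrix.mul_one]
  simp only [Matrix.trace_add, Matrix.trace_sub, Matrix.trace_transpose, hTrP, hTrPP,
    Matrix.trace_one]
  simp
  ring
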